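/- arXiv:2411.02122 — 4 statements merged into one kernel-verified Lean document; each statement's English description precedes it below -/
import Mathlib

section
/- For every graph G, every tree decomposition V of G, every family F of connected subgraphs of G, and every nonnegative integer d, either (1) there are d+1 pairwise vertex-disjoint subgraphs in F, or (2) there is a set Z ⊆ V(G) that is the union of at most d bags of V such that V(F) ∩ Z ≠ ∅ for every F ∈ F. -/
open SimpleGraph

section Defs

variable {V : Type*} {ι : Type*} {α : Type*}

/-- `G` has no `K_t`-minor: there is no family of `t` pairwise disjoint nonempty connected
vertex sets with an edge of `G` between any two of them. -/
def CliqueMinorFree (G : SimpleGraph V) (t : ℕ) : Prop :=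
  ¬ ∃ B : Fin t → Set V,
      (∀ i, (G.induce (B i)).Connected) ∧
      (∀ i j, i ≠ j → Disjoint (B i) (B j)) ∧
      (∀ i j, i ≠ j → ∃ u ∈ B i, ∃ w ∈ B j, G.Adj u w)

/-- `(T, W)` is a tree decomposition of `G`. -/
structure IsTreeDecomp (G : SimpleGraph V) (T : SimpleGraph ι) (W : ι → Set V) : Prop where
  isTree : T.IsTree
  bagsConnected : ∀ u : V, (T.induce {x : ι | u ∈ W x}).Connected
  edgeInBag : ∀ ⦃u w : V⦄, G.Adj u w → ∃ x, u ∈ W x ∧ w ∈ W x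

/-- The tree decomposition with bags `W` has width at most `w`. -/
def TDWidthLE (W : ι → Set V) (w : ℕ) : Prop := ∀ x, (W x).ncard ≤ w + 1

/-- `φ` is a `p`-centered coloring of `G`: every nonempty connected subgraph on which `φ`
uses at most `p` colors has a vertex of unique color. -/
def IsCenteredColoring (p : ℕ) (G : SimpleGraph V) (φ : V → α) : Prop :=
  ∀ H : G.Subgraph, H.Connected →
    p < (φ '' H.verts).ncard ∨ ∃ u ∈ H.verts, ∀ w ∈ H.verts, w ≠ u → φ w ≠ φ u

/-- The `p`-centered chromatic number of `G`. -/
noncomputable def centeredChromaticNumber (p : ℕ) (G : SimpleGraph V) : ℕ :=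
  sInf {k | ∃ φ : V → Fin k, IsCenteredColoring p G φ}

/-- `φ` is a `p`-centered coloring of `(G, σ)`: on every nonempty connected subgraph either
more than `p` colors are used, or the `σ`-minimal vertex has a unique color. -/
def IsOrderedCenteredColoring (p : ℕ) (G : SimpleGraph V) (σ : V → ℕ) (φ : V → α) : Prop :=
  ∀ H : G.Subgraph, H.Connected →
    p < (φ '' H.verts).ncard ∨
      ∃ u ∈ H.verts, (∀ w ∈ H.verts, σ u ≤ σ w) ∧ ∀ w ∈ H.verts, w ≠ u → φ w ≠ φ u

/-- The `p`-centered chromatic number of `(G, σ)`. -/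
noncomputable def orderedCenteredChromaticNumber (p : ℕ) (G : SimpleGraph V) (σ : V → ℕ) : ℕ :=
  sInf {k | ∃ φ : V → Fin k, IsOrderedCenteredColoring p G σ φ}

/-- `σ` (an injection into `ℕ`, representing a linear ordering of the vertices) is an
elimination ordering of the tree decomposition with bags `W`. -/
def IsEliminationOrdering (W : ι → Set V) (σ : V → ℕ) : Prop :=
  Function.Injective σ ∧
    ∀ u : V, ∃ x : ι, ∀ w : V, (∃ z, u ∈ W z ∧ w ∈ W z) → σ w < σ u → w ∈ W x

/-- `Pa` is a partition of the vertex set into nonempty parts. -/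
def IsVertexPartition (Pa : Set (Set V)) : Prop :=
  (∀ P ∈ Pa, P.Nonempty) ∧ ∀ u : V, ∃! P, P ∈ Pa ∧ u ∈ P

/-- The quotient graph `G/Pa`. -/
def quotientGraph (G : SimpleGraph V) (Pa : Set (Set V)) : SimpleGraph Pa where
  Adj P Q := P ≠ Q ∧ ∃ u ∈ (P : Set V), ∃ w ∈ (Q : Set V), G.Adj u w
  symm := by
    constructor
    rintro P Q ⟨hPQ, u, hu, w, hw, hadj⟩
    exact ⟨hPQ.symm, w, hw, u, hu, hadj.symm⟩
  loopless := by constructor; rintro P ⟨h, -⟩; exact h rfl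

/-- The neighborhood of a set of vertices. -/
def nbhdSet (G : SimpleGraph V) (S : Set V) : Set V :=
  {w | w ∉ S ∧ ∃ u ∈ S, G.Adj u w}

/-- `C` is (the vertex set of) a connected component of `G - Z`. -/
def IsCompOfDel (G : SimpleGraph V) (Z C : Set V) : Prop :=
  Disjoint C Z ∧ (G.induce C).Connected ∧
    ∀ u ∈ C, ∀ w, G.Adj u w → w ∉ Z → w ∈ C

/-- The neighborhood of a set of vertices in a subgraph. -/
def subNbhdSet {G : SimpleGraph V} (G₀ : G.Subgraph) (S : Set V) : Set V :=
  {w | w ∉ S ∧ ∃ u ∈ S, G₀.Adj u w}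

/-- `C` is (the vertex set of) a connected component of `G₀ - Z`, for a subgraph `G₀`. -/
def IsCompOfSubDel {G : SimpleGraph V} (G₀ : G.Subgraph) (Z C : Set V) : Prop :=
  C ⊆ G₀.verts \ Z ∧ (G₀.induce C).Connected ∧
    ∀ u ∈ C, ∀ w ∈ G₀.verts \ Z, G₀.Adj u w → w ∈ C

/-- `φ` is a `(p,c)`-good coloring of `G`. -/
def IsGoodColoring (p c : ℕ) (G : SimpleGraph V) (φ : V → ℕ) : Prop :=
  ∀ G₀ : G.Subgraph, ∀ 𝓕 : Set G.Subgraph,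
    (∀ F ∈ 𝓕, F ≤ G₀ ∧ F.Connected) →
    ∀ d : ℕ, 0 < d →
      (¬ ∃ f : Fin (d + 1) → G.Subgraph,
          (∀ i, f i ∈ 𝓕) ∧ ∀ i j, i ≠ j → Disjoint (f i).verts (f j).verts) →
      ∃ Z : Set V, Z ⊆ G₀.verts ∧ ∃ ψ : V → ℕ,
        (∀ u ∈ Z, 1 ≤ ψ u ∧ ψ u ≤ c * d) ∧
        (∀ F ∈ 𝓕, (F.verts ∩ Z).Nonempty) ∧
        (∀ H : G.Subgraph, H ≤ G₀ → H.Connected → (H.verts ∩ Z).Nonempty →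
          p < (φ '' H.verts).ncard ∨
            ∃ u ∈ H.verts ∩ Z, ∀ w ∈ H.verts ∩ Z, w ≠ u → (φ w, ψ w) ≠ (φ u, ψ u)) ∧
        (∀ C : Set V, IsCompOfSubDel G₀ Z C →
          ∃ D₁ D₂ : Set V, ∀ D, IsCompOfSubDel G₀ C D →
            (subNbhdSet G₀ C ∩ D).Nonempty → D = D₁ ∨ D = D₂)

/-- Adjacency in the torso of `W` in `G`: two distinct vertices of `W` joined by a
walk of `G` all of whose internal vertices avoid `W`. -/
def TorsoAdj (G : SimpleGraph V) (W : Set V) (u w : V) : Prop :=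
  u ∈ W ∧ w ∈ W ∧ u ≠ w ∧
    ∃ q : G.Walk u w, ∀ x ∈ q.support, x ∈ W → x = u ∨ x = w

/-- The torso of `W` in `G`. -/
def torso (G : SimpleGraph V) (W : Set V) : SimpleGraph W where
  Adj u w := TorsoAdj G W ↑u ↑w
  symm := by
    constructor
    intro u w h
    obtain ⟨hu, hw, hne, q, hq⟩ := h
    exact ⟨hw, hu, hne.symm, q.reverse, fun x hx hxW => by
      rw [Walk.support_reverse, List.mem_reverse] at hx
      exact (hq x hx hxW).symm⟩
  loopless := by
    constructor
    intro u h
    exact h.2.2.1 rfl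

/-- In the tree `T` rooted at `r`, the vertex `u` is an ancestor of `w`
(i.e. `u` lies on every walk from the root to `w`). -/
def IsAncestor (T : SimpleGraph α) (r u w : α) : Prop :=
  ∀ q : T.Walk r w, u ∈ q.support

/-- `x` is the lowest common ancestor of `u` and `w` in the tree `T` rooted at `r`. -/
def IsLCA (T : SimpleGraph α) (r x u w : α) : Prop :=
  IsAncestor T r x u ∧ IsAncestor T r x w ∧
    ∀ y, IsAncestor T r y u → IsAncestor T r y w → IsAncestor T r y x

/-- The lowest common ancestor closure of `Y` in the tree `T` rooted at `r`. -/
def lcaClosure (T : SimpleGraph α) (r : α) (Y : Set α) : Set α :=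
  {x | ∃ u ∈ Y, ∃ w ∈ Y, IsLCA T r x u w}

/-- The vertex set of `T_{x|y}`: the component of `x` in `T` minus the edge `xy`.
(For adjacent `x y` in a tree these are the vertices `z` such that
the path from `z` to `y` passes through `x`.) -/
def sideVerts (T : SimpleGraph α) (x y : α) : Set α :=
  {z | ∀ q : T.Walk z y, x ∈ q.support}

/-- The tree decomposition `(T, W)` of `G` is natural. -/
def IsNaturalTD (G : SimpleGraph V) (T : SimpleGraph ι) (W : ι → Set V) : Prop :=
  ∀ x y, T.Adj x y → (G.induce (⋃ z ∈ sideVerts T x y, W z)).Connected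

end Defs

/-! The bags meeting a connected subgraph span a subtree of `T`, and subgraphs with disjoint
subtrees are disjoint, so it suffices to prove the statement for subtrees of a tree. Root the
tree at `r` and pick a member whose vertex closest to `r`, say `x₀`, is as far from `r` as
possible: every member meeting it contains `x₀`. Put `x₀` into the hitting set, discard the
members through `x₀` and induct on `d`. -/

section Helly

variable {β ι : Type*} (S : β → Set ι)

def HasDisjointMembers (𝓕 : Set β) (k : ℕ) : Prop :=
  ∃ f : Fin k → β, (∀ i, f i ∈ 𝓕) ∧ Pairwise fun i j => Disjoint (S (f i)) (S (f j))

def HasHittingSet (𝓕 : Set β) (k : ℕ) : Prop :=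
  ∃ s : Set ι, s.ncard ≤ k ∧ ∀ F ∈ 𝓕, (S F ∩ s).Nonempty

variable {S}

theorem HasDisjointMembers.cons {𝓕 𝓖 : Set β} {k : ℕ} (h : HasDisjointMembers S 𝓖 k)
    (h𝓖 : 𝓖 ⊆ 𝓕) {F₀ : β} (hF₀ : F₀ ∈ 𝓕) (hdisj : ∀ F ∈ 𝓖, Disjoint (S F₀) (S F)) :
    HasDisjointMembers S 𝓕 (k + 1) := by
  obtain ⟨f, hf, hpair⟩ := h
  refine ⟨Fin.cons F₀ f, Fin.cases hF₀ fun i => h𝓖 (hf i), fun i j hij => ?_⟩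
  cases i using Fin.cases <;> cases j using Fin.cases
  · exact (hij rfl).elim
  · exact hdisj _ (hf _)
  · exact (hdisj _ (hf _)).symm
  · exact hpair fun h => hij (congrArg _ h)

theorem HasHittingSet.of_sep_notMem {𝓕 : Set β} {k : ℕ} {x₀ : ι}
    (h : HasHittingSet S {F ∈ 𝓕 | x₀ ∉ S F} k) : HasHittingSet S 𝓕 (k + 1) := by
  obtain ⟨s, hs, hsF⟩ := h
  refine ⟨insert x₀ s, (Set.ncard_insert_le _ _).trans (by omega), fun F hF => ?_⟩
  by_cases hx₀ : x₀ ∈ S F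
  · exact ⟨x₀, hx₀, s.mem_insert x₀⟩
  · exact (hsF F ⟨hF, hx₀⟩).mono (Set.inter_subset_inter_right _ (s.subset_insert x₀))

theorem hasDisjointMembers_or_hasHittingSet {𝓕 : Set β}
    (hanchor : ∀ 𝓖 ⊆ 𝓕, 𝓖.Nonempty → ∃ F₀ ∈ 𝓖, ∃ x₀, ∀ F ∈ 𝓖, (S F ∩ S F₀).Nonempty → x₀ ∈ S F)
    (d : ℕ) : HasDisjointMembers S 𝓕 (d + 1) ∨ HasHittingSet S 𝓕 d := by
  induction d generalizing 𝓕 with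
  | zero =>
    rcases 𝓕.eq_empty_or_nonempty with rfl | ⟨F, hF⟩
    · exact Or.inr ⟨∅, by simp, by simp⟩
    · exact Or.inl ⟨fun _ => F, fun _ => hF,
        fun i j hij => (hij (Subsingleton.elim (α := Fin 1) i j)).elim⟩
  | succ d ih =>
    rcases 𝓕.eq_empty_or_nonempty with rfl | h𝓕
    · exact Or.inr ⟨∅, by simp, by simp⟩
    obtain ⟨F₀, hF₀, x₀, hx₀⟩ := hanchor 𝓕 subset_rfl h𝓕
    have hsub : {F ∈ 𝓕 | x₀ ∉ S F} ⊆ 𝓕 := Set.sep_subset _ _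
    refine (ih fun 𝓖 h𝓖 => hanchor 𝓖 (h𝓖.trans hsub)).imp
      (fun h => h.cons hsub hF₀ fun F hF => ?_) HasHittingSet.of_sep_notMem
    exact Set.disjoint_right.mpr fun y hy hy₀ => hF.2 (hx₀ F hF.1 ⟨y, hy, hy₀⟩)

end Helly

namespace SimpleGraph

variable {V ι β : Type*}

theorem Walk.IsPath.append {G : SimpleGraph V} {u v w : V} {p : G.Walk u v} {q : G.Walk v w}
    (hp : p.IsPath) (hq : q.IsPath) (h : ∀ y ∈ p.support, y ∈ q.support → y = v) :
    (p.append q).IsPath := by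
  have hq' := hq.support_nodup
  rw [← Walk.cons_tail_support, List.nodup_cons] at hq'
  rw [Walk.isPath_def, Walk.support_append, List.nodup_append]
  refine ⟨hp.support_nodup, hq'.2, fun a ha b hb hab => ?_⟩
  subst hab
  exact hq'.1 (h a ha (List.mem_of_mem_tail hb) ▸ hb)

theorem connected_induce_iUnion {G : SimpleGraph V} {T : SimpleGraph ι} (hG : G.Connected)
    {f : V → Set ι} (hf : ∀ u, (T.induce (f u)).Connected)
    (hadj : ∀ ⦃u w⦄, G.Adj u w → (f u ∩ f w).Nonempty) :
    (T.induce (⋃ u, f u)).Connected := by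
  have hsub : ∀ u, f u ⊆ ⋃ u, f u := Set.subset_iUnion f
  have reach_within : ∀ u {a b} (ha : a ∈ f u) (hb : b ∈ f u),
      (T.induce (⋃ u, f u)).Reachable ⟨a, hsub u ha⟩ ⟨b, hsub u hb⟩ := fun u a b ha hb =>
    ((hf u).preconnected ⟨a, ha⟩ ⟨b, hb⟩).map (induceHomOfLE T (hsub u)).toHom
  have reach_along : ∀ {u w} (_ : G.Walk u w) {a b} (ha : a ∈ f u) (hb : b ∈ f w),
      (T.induce (⋃ u, f u)).Reachable ⟨a, hsub u ha⟩ ⟨b, hsub w hb⟩ := by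
    intro u w p
    induction p with
    | nil => exact reach_within _
    | cons h _ ih =>
      intro a b ha hb
      obtain ⟨c, hcu, hcw⟩ := hadj h
      exact (reach_within _ ha hcu).trans (ih hcw hb)
  obtain ⟨u⟩ := hG.nonempty
  obtain ⟨⟨a, ha⟩⟩ := (hf u).nonempty
  rw [connected_iff_exists_forall_reachable]
  refine ⟨⟨a, hsub u ha⟩, fun ⟨b, hb⟩ => ?_⟩
  obtain ⟨w, hbw⟩ := Set.mem_iUnion.mp hb
  exact reach_along (hG.preconnected u w).some ha hbw

namespace IsTree

variable {T : SimpleGraph ι}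

theorem length_eq_dist (hT : T.IsTree) {u v : ι} {p : T.Walk u v} (hp : p.IsPath) :
    p.length = T.dist u v := by
  obtain ⟨q, hq, hlen⟩ := hT.connected.exists_path_of_dist u v
  rw [← hlen, (hT.existsUnique_path u v).unique hp hq]

theorem mem_support_iff_dist_add_dist (hT : T.IsTree) {u v y : ι} {p : T.Walk u v}
    (hp : p.IsPath) : y ∈ p.support ↔ T.dist u y + T.dist y v = T.dist u v := by
  classical
  constructor
  · intro hy
    rw [← hT.length_eq_dist (hp.takeUntil hy), ← hT.length_eq_dist (hp.dropUntil hy),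
      ← hT.length_eq_dist hp, ← Walk.length_append, p.take_spec hy]
  · intro h
    obtain ⟨q₁, -, h₁⟩ := hT.connected.exists_path_of_dist u y
    obtain ⟨q₂, -, h₂⟩ := hT.connected.exists_path_of_dist y v
    have hq : (q₁.append q₂).IsPath :=
      Walk.isPath_of_length_eq_dist _ (by rw [Walk.length_append, h₁, h₂, h])
    rw [(hT.existsUnique_path u v).unique hp hq, Walk.mem_support_append_iff]
    exact Or.inl q₁.end_mem_support

theorem mem_of_dist_add_dist (hT : T.IsTree) {S : Set ι} (hS : (T.induce S).Connected)
    {a b y : ι} (ha : a ∈ S) (hb : b ∈ S) (h : T.dist a y + T.dist y b = T.dist a b) : y ∈ S := by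
  classical
  obtain ⟨q⟩ := hS.preconnected ⟨a, ha⟩ ⟨b, hb⟩
  let p := (q.map (Embedding.induce S).toHom).bypass
  have hy : y ∈ p.support := (hT.mem_support_iff_dist_add_dist (Walk.bypass_isPath _)).mpr h
  obtain ⟨z, -, rfl⟩ :=
    List.mem_map.mp (Walk.support_map _ q ▸ Walk.support_bypass_subset_support _ hy)
  exact z.2

theorem dist_add_dist_of_forall_dist_le (hT : T.IsTree) {S : Set ι} (hS : (T.induce S).Connected)
    {r x z : ι} (hx : x ∈ S) (hmin : ∀ y ∈ S, T.dist r x ≤ T.dist r y) (hz : z ∈ S) :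
    T.dist r x + T.dist x z = T.dist r z := by
  obtain ⟨R, hR, hRlen⟩ := hT.connected.exists_path_of_dist r x
  obtain ⟨Q, hQ, hQlen⟩ := hT.connected.exists_path_of_dist x z
  have hRQ : (R.append Q).IsPath := by
    refine hR.append hQ fun y hyR hyQ => ?_
    have hyS := hT.mem_of_dist_add_dist hS hx hz ((hT.mem_support_iff_dist_add_dist hQ).mp hyQ)
    have hry := (hT.mem_support_iff_dist_add_dist hR).mp hyR
    have := hmin y hyS
    exact hT.connected.dist_eq_zero_iff.mp (by omega)
  rw [← hRlen, ← hQlen, ← Walk.length_append, hT.length_eq_dist hRQ]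

/- Both `x` and `x'` lie on the path from `r` to a common vertex `z`; since `x'` is not deeper,
`x` lies between `x'` and `z`, hence in `S'`. -/
theorem mem_of_inter_nonempty (hT : T.IsTree) {S S' : Set ι} (hS : (T.induce S).Connected)
    (hS' : (T.induce S').Connected) {r x x' : ι} (hx : x ∈ S)
    (hxmin : ∀ y ∈ S, T.dist r x ≤ T.dist r y) (hx' : x' ∈ S')
    (hx'min : ∀ y ∈ S', T.dist r x' ≤ T.dist r y) (hle : T.dist r x' ≤ T.dist r x)
    (hSS' : (S ∩ S').Nonempty) : x ∈ S' := by
  classical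
  obtain ⟨z, hzS, hzS'⟩ := hSS'
  obtain ⟨P, hP, -⟩ := hT.connected.exists_path_of_dist r z
  have hxP : x ∈ P.support := (hT.mem_support_iff_dist_add_dist hP).mpr
    (hT.dist_add_dist_of_forall_dist_le hS hx hxmin hzS)
  have hx'P : x' ∈ P.support := (hT.mem_support_iff_dist_add_dist hP).mpr
    (hT.dist_add_dist_of_forall_dist_le hS' hx' hx'min hzS')
  rw [← P.take_spec hx'P, Walk.mem_support_append_iff] at hxP
  rcases hxP with hxr | hxz
  · have := (hT.mem_support_iff_dist_add_dist (hP.takeUntil hx'P)).mp hxr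
    rwa [hT.connected.dist_eq_zero_iff.mp (by omega : T.dist x x' = 0)]
  · exact hT.mem_of_dist_add_dist hS' hx' hzS'
      ((hT.mem_support_iff_dist_add_dist (hP.dropUntil hx'P)).mp hxz)

theorem exists_forall_inter_nonempty_imp_mem [Finite ι] (hT : T.IsTree) {S : β → Set ι}
    {𝓕 : Set β} (hS : ∀ F ∈ 𝓕, (T.induce (S F)).Connected) (h𝓕 : 𝓕.Nonempty) :
    ∃ F₀ ∈ 𝓕, ∃ x₀, ∀ F ∈ 𝓕, (S F ∩ S F₀).Nonempty → x₀ ∈ S F := by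
  have : Nonempty ι := hT.connected.nonempty
  let r : ι := Classical.arbitrary ι
  have hpeak : ∀ F ∈ 𝓕, ∃ x ∈ S F, ∀ y ∈ S F, T.dist r x ≤ T.dist r y := fun F hF =>
    (S F).exists_min_image (T.dist r) (S F).toFinite (Set.nonempty_coe_sort.mp (hS F hF).nonempty)
  choose! peak hpeak_mem hpeak_min using hpeak
  obtain ⟨_, ⟨F₀, hF₀, rfl⟩, hmax⟩ :=
    Set.exists_max_image (peak '' 𝓕) (T.dist r) (Set.toFinite _) (h𝓕.image peak)
  refine ⟨F₀, hF₀, peak F₀, fun F hF hmeet => ?_⟩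
  exact hT.mem_of_inter_nonempty (hS F₀ hF₀) (hS F hF) (hpeak_mem F₀ hF₀) (hpeak_min F₀ hF₀)
    (hpeak_mem F hF) (hpeak_min F hF) (hmax _ ⟨F, hF, rfl⟩) (Set.inter_comm _ _ ▸ hmeet)

theorem hasDisjointMembers_or_hasHittingSet [Finite ι] (hT : T.IsTree) {S : β → Set ι}
    {𝓕 : Set β} (hS : ∀ F ∈ 𝓕, (T.induce (S F)).Connected) (d : ℕ) :
    HasDisjointMembers S 𝓕 (d + 1) ∨ HasHittingSet S 𝓕 d :=
  _root_.hasDisjointMembers_or_hasHittingSet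
    (fun _ h𝓖 => hT.exists_forall_inter_nonempty_imp_mem fun F hF => hS F (h𝓖 hF)) d

end IsTree

end SimpleGraph

theorem IsTreeDecomp.connected_induce_setOf_inter_nonempty {V ι : Type*} {G : SimpleGraph V}
    {T : SimpleGraph ι} {W : ι → Set V} (hTD : IsTreeDecomp G T W) {F : G.Subgraph}
    (hF : F.Connected) : (T.induce {x | (W x ∩ F.verts).Nonempty}).Connected := by
  have hbags : {x | (W x ∩ F.verts).Nonempty} = ⋃ u : F.verts, {x | (u : V) ∈ W x} := by
    ext x
    simp [Set.Nonempty, and_comm]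
  rw [hbags]
  exact connected_induce_iUnion hF.coe (fun u => hTD.bagsConnected u)
    fun _ _ huw => hTD.edgeInBag (F.adj_sub huw)

theorem helly_tree_decomposition_general {V : Type} {ι : Type} [Fintype ι]
    (G : SimpleGraph V) (T : SimpleGraph ι) (W : ι → Set V)
    (hTD : IsTreeDecomp G T W)
    (𝓕 : Set G.Subgraph) (h𝓕 : ∀ F ∈ 𝓕, F.Connected) (d : ℕ) :
    (∃ f : Fin (d + 1) → G.Subgraph, (∀ i, f i ∈ 𝓕) ∧
        ∀ i j, i ≠ j → Disjoint (f i).verts (f j).verts) ∨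
      ∃ s : Set ι, s.ncard ≤ d ∧
        ∀ F ∈ 𝓕, (F.verts ∩ ⋃ x ∈ s, W x).Nonempty := by
  rcases hTD.isTree.hasDisjointMembers_or_hasHittingSet
      (fun F hF => hTD.connected_induce_setOf_inter_nonempty (h𝓕 F hF)) d
    with ⟨f, hf𝓕, hf⟩ | ⟨s, hs, hsF⟩
  · refine .inl ⟨f, hf𝓕, fun i j hij => Set.disjoint_left.mpr fun u hui huj => ?_⟩
    obtain ⟨⟨x, hx⟩⟩ := (hTD.bagsConnected u).nonempty
    exact Set.disjoint_left.mp (hf hij) (⟨u, hx, hui⟩ : (W x ∩ _).Nonempty) ⟨u, hx, huj⟩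
  · refine .inr ⟨s, hs, fun F hF => ?_⟩
    obtain ⟨x, ⟨u, hux, huF⟩, hxs⟩ := hsF F hF
    exact ⟨u, huF, Set.mem_biUnion hxs hux⟩

/-- Helly-type property of tree decompositions: for a family `𝓕` of connected
subgraphs of `G`, either there are `d+1` pairwise vertex-disjoint members of `𝓕`, or the
union of at most `d` bags meets every member of `𝓕`. -/
theorem helly_tree_decomposition {V : Type} [Fintype V] {ι : Type} [Fintype ι]
    (G : SimpleGraph V) (T : SimpleGraph ι) (W : ι → Set V)
    (hTD : IsTreeDecomp G T W)
    (𝓕 : Set G.Subgraph) (h𝓕 : ∀ F ∈ 𝓕, F.Connected) (d : ℕ) :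
    (∃ f : Fin (d + 1) → G.Subgraph, (∀ i, f i ∈ 𝓕) ∧
        ∀ i j, i ≠ j → Disjoint (f i).verts (f j).verts) ∨
      ∃ s : Set ι, s.ncard ≤ d ∧
        ∀ F ∈ 𝓕, (F.verts ∩ ⋃ x ∈ s, W x).Nonempty :=
  helly_tree_decomposition_general G T W hTD 𝓕 h𝓕 d
end

section
/- Let m be a positive integer, let T be a rooted tree, and let Y be a set of m vertices of T. Let X = LCA(T,Y) be the lowest common ancestor closure of Y. Then |X| ≤ 2m − 1, and for every component C of T − X, the neighborhood N_T(V(C)) has size at most 2. -/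
open SimpleGraph

/-!
In a tree rooted at `r`, `x` is an ancestor of `u` iff the root path of `x` is a prefix of that
of `u`; hence the ancestors of a vertex form a chain and lowest common ancestors exist.

Adding a vertex `y` to `Y` adds to the closure only `y` and the deepest of the vertices
`lca(y, u)`, `u ∈ Y`: a strictly higher one, `b = lca(y, w)` above `a = lca(y, u)`, equals
`lca(u, w)`. Induction on `Y` gives the bound `2|Y| - 1`.

The closure `X` is closed under `lca`. Two neighbours `x, y` of a component `C` of `T - X` lie in
`X` and are joined by a path through `C`; the path contains `lca(x, y) ∈ X`, so `lca(x, y)` is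
`x` or `y`. Thus the neighbours of `C` are pairwise comparable, and no three of them form a chain
`a < b < c`, since the path from `a` to `c` through `C` passes through every vertex between them.
-/

section RootedTree

variable {α : Type*} {T : SimpleGraph α} {r a b c l u v w x y z : α}

noncomputable def treePath (hT : T.IsTree) (u v : α) : T.Walk u v :=
  (hT.existsUnique_path u v).choose

lemma isPath_treePath (hT : T.IsTree) (u v : α) : (treePath hT u v).IsPath :=
  (hT.existsUnique_path u v).choose_spec.1

lemma eq_treePath (hT : T.IsTree) {p : T.Walk u v} (hp : p.IsPath) : p = treePath hT u v :=
  (hT.existsUnique_path u v).unique hp (isPath_treePath hT u v)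

noncomputable def depth (hT : T.IsTree) (r u : α) : ℕ := (treePath hT r u).length

lemma isAncestor_root (r u : α) : IsAncestor T r r u := fun q => q.start_mem_support

lemma isAncestor_refl (r u : α) : IsAncestor T r u u := fun q => q.end_mem_support

lemma isAncestor_iff_mem_support (hT : T.IsTree) :
    IsAncestor T r x u ↔ x ∈ (treePath hT r u).support := by
  classical
  exact ⟨fun h => h _, fun h q =>
    q.support_bypass_subset_support (eq_treePath hT q.bypass_isPath ▸ h)⟩

lemma mem_support_of_isAncestor_of_not_isAncestor (q : T.Walk x y) (hy : IsAncestor T r z y)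
    (hx : ¬IsAncestor T r z x) : z ∈ q.support := by
  obtain ⟨p, hp⟩ := not_forall.mp hx
  exact ((Walk.mem_support_append_iff p q).mp (hy (p.append q))).resolve_left hp

lemma treePath_eq_append (hT : T.IsTree) (h : IsAncestor T r x u) :
    ∃ p : T.Walk x u, p.IsPath ∧ treePath hT r u = (treePath hT r x).append p := by
  obtain ⟨q, p, hq, hp, hqp⟩ := (isPath_treePath hT r u).mem_support_iff_exists_append.mp
    ((isAncestor_iff_mem_support hT).mp h)
  exact ⟨p, hp, by rw [hqp, eq_treePath hT hq]⟩

lemma isAncestor_iff_prefix (hT : T.IsTree) :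
    IsAncestor T r x u ↔ (treePath hT r x).support <+: (treePath hT r u).support := by
  refine ⟨fun h => ?_, fun h => (isAncestor_iff_mem_support hT).mpr
    (h.subset (treePath hT r x).end_mem_support)⟩
  obtain ⟨p, -, hp⟩ := treePath_eq_append hT h
  rw [hp, Walk.support_append]
  exact List.prefix_append _ _

lemma IsAncestor.depth_le (hT : T.IsTree) (h : IsAncestor T r x u) :
    depth hT r x ≤ depth hT r u := by
  simpa [depth, Walk.length_support] using ((isAncestor_iff_prefix hT).mp h).length_le

lemma IsAncestor.eq_of_depth_le (hT : T.IsTree) (h : IsAncestor T r x u)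
    (hd : depth hT r u ≤ depth hT r x) : x = u := by
  have hs := ((isAncestor_iff_prefix hT).mp h).eq_of_length_le
    (by simpa [depth, Walk.length_support] using hd)
  rw [← (treePath hT r x).getLast_support, ← (treePath hT r u).getLast_support]
  simp only [hs]

lemma IsAncestor.antisymm (hT : T.IsTree) (h : IsAncestor T r x u) (h' : IsAncestor T r u x) :
    x = u :=
  h.eq_of_depth_le hT (h'.depth_le hT)

lemma IsAncestor.trans (hT : T.IsTree) (h : IsAncestor T r x y) (h' : IsAncestor T r y u) :
    IsAncestor T r x u := by
  rw [isAncestor_iff_prefix hT] at *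
  exact h.trans h'

lemma IsAncestor.total (hT : T.IsTree) (hx : IsAncestor T r x u) (hy : IsAncestor T r y u) :
    IsAncestor T r x y ∨ IsAncestor T r y x := by
  simp only [isAncestor_iff_prefix hT] at *
  exact List.prefix_or_prefix_of_prefix hx hy

lemma finite_setOf_isAncestor (hT : T.IsTree) (r u : α) : {x | IsAncestor T r x u}.Finite := by
  simpa only [isAncestor_iff_mem_support hT] using (treePath hT r u).support.finite_toSet

lemma exists_isLCA (hT : T.IsTree) (r u w : α) : ∃ c, IsLCA T r c u w := by
  obtain ⟨c, ⟨hcu, hcw⟩, hmax⟩ := Set.exists_max_image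
    {x | IsAncestor T r x u ∧ IsAncestor T r x w} (depth hT r)
    ((finite_setOf_isAncestor hT r u).subset fun _ h => h.1)
    ⟨r, isAncestor_root r u, isAncestor_root r w⟩
  refine ⟨c, hcu, hcw, fun y hyu hyw => ?_⟩
  rcases hyu.total hT hcu with h | h
  · exact h
  · obtain rfl := h.eq_of_depth_le hT (hmax y ⟨hyu, hyw⟩)
    exact isAncestor_refl r c

lemma isLCA_of_isAncestor (h : IsAncestor T r x u) : IsLCA T r x x u :=
  ⟨isAncestor_refl r x, h, fun _ h₁ _ => h₁⟩

lemma IsLCA.symm (h : IsLCA T r c u w) : IsLCA T r c w u :=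
  ⟨h.2.1, h.1, fun y h₁ h₂ => h.2.2 y h₂ h₁⟩

lemma IsLCA.unique (hT : T.IsTree) (h : IsLCA T r c u w) (h' : IsLCA T r l u w) : c = l :=
  (h'.2.2 c h.1 h.2.1).antisymm hT (h.2.2 l h'.1 h'.2.1)

lemma IsLCA.isLCA_of_isAncestor_of_ne (hT : T.IsTree) (ha : IsLCA T r a y u)
    (hb : IsLCA T r b y w) (hba : IsAncestor T r b a) (hne : b ≠ a) : IsLCA T r b u w := by
  refine ⟨hba.trans hT ha.2.1, hb.2.1, fun z hzu hzw => ?_⟩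
  rcases hzu.total hT ha.2.1 with hza | haz
  · exact hb.2.2 z (hza.trans hT ha.1) hzw
  · exact absurd (hba.antisymm hT (hb.2.2 a ha.1 (haz.trans hT hzw))) hne

lemma IsLCA.mem_support_of_isPath (hT : T.IsTree) (hl : IsLCA T r l x y) {q : T.Walk x y}
    (hq : q.IsPath) : l ∈ q.support := by
  obtain ⟨p, hp, hpx⟩ := treePath_eq_append hT hl.1
  obtain ⟨p', hp', hpy⟩ := treePath_eq_append hT hl.2.1
  have hdisj : (treePath hT r l).support.Disjoint p'.support.tail := by
    have := (isPath_treePath hT r y).support_nodup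
    rw [hpy, Walk.support_append] at this
    exact List.disjoint_of_nodup_append this
  -- The two halves of `x → l → y` meet only in `l`: a common vertex is a common ancestor of
  -- `x` and `y`, hence lies on the root path of `l`.
  have hpath : (p.reverse.append p').IsPath := by
    rw [Walk.isPath_def, Walk.support_append, Walk.support_reverse]
    refine (List.nodup_reverse.mpr hp.support_nodup).append hp'.support_nodup.tail
      fun z hz hz' => hdisj ?_ hz'
    have hzx : IsAncestor T r z x := (isAncestor_iff_mem_support hT).mpr
      (hpx ▸ Walk.mem_support_append_iff _ _ |>.mpr (Or.inr (List.mem_reverse.mp hz)))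
    have hzy : IsAncestor T r z y := (isAncestor_iff_mem_support hT).mpr
      (hpy ▸ Walk.mem_support_append_iff _ _ |>.mpr (Or.inr (List.mem_of_mem_tail hz')))
    exact (isAncestor_iff_mem_support hT).mp (hl.2.2 z hzx hzy)
  rw [(hT.existsUnique_path x y).unique hq hpath, Walk.mem_support_append_iff]
  exact Or.inr p'.start_mem_support

end RootedTree

section LCAClosure

variable {α : Type*} {T : SimpleGraph α} {r a b c : α} {Y : Set α}

lemma subset_lcaClosure (T : SimpleGraph α) (r : α) (Y : Set α) : Y ⊆ lcaClosure T r Y :=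
  fun u hu => ⟨u, hu, u, hu, isLCA_of_isAncestor (isAncestor_refl r u)⟩

lemma lcaClosure_singleton_subset (hT : T.IsTree) (y : α) : lcaClosure T r {y} ⊆ {y} := by
  rintro c ⟨_, rfl, _, rfl, hc⟩
  exact hc.unique hT (isLCA_of_isAncestor (isAncestor_refl r _))

lemma finite_lcaClosure (hT : T.IsTree) (hY : Y.Finite) : (lcaClosure T r Y).Finite :=
  (hY.biUnion fun u _ => finite_setOf_isAncestor hT r u).subset
    fun _ ⟨_, hu, _, _, hc⟩ => Set.mem_biUnion hu hc.1

lemma IsLCA.mem_lcaClosure (hT : T.IsTree) (ha : a ∈ lcaClosure T r Y) (hb : b ∈ lcaClosure T r Y)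
    (hc : IsLCA T r c a b) : c ∈ lcaClosure T r Y := by
  by_cases hca : c = a
  · exact hca ▸ ha
  by_cases hcb : c = b
  · exact hcb ▸ hb
  obtain ⟨u, hu, _, _, hA⟩ := ha
  obtain ⟨w, hw, _, _, hB⟩ := hb
  have hcu : IsLCA T r c u b := (isLCA_of_isAncestor hA.1).isLCA_of_isAncestor_of_ne hT hc hc.1 hca
  exact ⟨w, hw, u, hu,
    (isLCA_of_isAncestor hB.1).isLCA_of_isAncestor_of_ne hT hcu.symm hc.2.1 hcb⟩

lemma exists_lcaClosure_insert_subset (hT : T.IsTree) (hY : Y.Nonempty) (y : α) :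
    ∃ a, lcaClosure T r (insert y Y) ⊆ insert a (insert y (lcaClosure T r Y)) := by
  set L := {z | ∃ u ∈ Y, IsLCA T r z y u}
  obtain ⟨u₀, hu₀⟩ := hY
  obtain ⟨a₀, ha₀⟩ := exists_isLCA hT r y u₀
  obtain ⟨a, ⟨ua, hua, ha⟩, hmax⟩ := Set.exists_max_image L (depth hT r)
    ((finite_setOf_isAncestor hT r y).subset fun _ ⟨_, _, hz⟩ => hz.1) ⟨a₀, u₀, hu₀, ha₀⟩
  have hL : ∀ c ∈ L, c = a ∨ c ∈ lcaClosure T r Y := by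
    rintro c ⟨w, hw, hc⟩
    by_cases hca : c = a
    · exact Or.inl hca
    have hcanc : IsAncestor T r c a := (hc.1.total hT ha.1).resolve_right fun hac =>
      hca (hac.eq_of_depth_le hT (hmax c ⟨w, hw, hc⟩)).symm
    exact Or.inr ⟨ua, hua, w, hw, ha.isLCA_of_isAncestor_of_ne hT hc hcanc hca⟩
  refine ⟨a, ?_⟩
  rintro c ⟨u, hu, w, hw, hc⟩
  rcases hu with rfl | hu <;> rcases hw with rfl | hw
  · exact .inr (.inl (lcaClosure_singleton_subset hT _ ⟨_, rfl, _, rfl, hc⟩))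
  · exact (hL c ⟨w, hw, hc⟩).imp id .inr
  · exact (hL c ⟨u, hu, hc.symm⟩).imp id .inr
  · exact .inr (.inr ⟨u, hu, w, hw, hc⟩)

lemma ncard_lcaClosure_le (hT : T.IsTree) (Y : Set α) :
    (lcaClosure T r Y).ncard ≤ 2 * Y.ncard - 1 := by
  rcases Y.finite_or_infinite with hY | hY
  swap
  · simp [(hY.mono (subset_lcaClosure T r Y)).ncard]
  induction Y, hY using Set.Finite.induction_on with
  | empty => simp [lcaClosure]
  | @insert y Y hyY hY ih =>
    rcases Y.eq_empty_or_nonempty with rfl | hne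
    · simpa using Set.ncard_le_ncard (lcaClosure_singleton_subset hT y)
    obtain ⟨a, ha⟩ := exists_lcaClosure_insert_subset hT hne y
    have hpos := hne.ncard_pos hY
    calc (lcaClosure T r (insert y Y)).ncard
        ≤ (insert a (insert y (lcaClosure T r Y))).ncard :=
          Set.ncard_le_ncard ha (((finite_lcaClosure hT hY).insert y).insert a)
      _ ≤ (lcaClosure T r Y).ncard + 2 :=
          (Set.ncard_insert_le _ _).trans (by simpa using Set.ncard_insert_le _ _)
      _ ≤ 2 * (insert y Y).ncard - 1 := by rw [Set.ncard_insert_of_notMem hyY hY]; omega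

end LCAClosure

section Components

variable {α : Type*} {T : SimpleGraph α} {r a b c x y : α} {C : Set α}

lemma exists_isPath_of_mem_nbhdSet (hC : (T.induce C).Connected) (hx : x ∈ nbhdSet T C)
    (hy : y ∈ nbhdSet T C) :
    ∃ q : T.Walk x y, q.IsPath ∧ ∀ z ∈ q.support, z = x ∨ z = y ∨ z ∈ C := by
  classical
  suffices ∃ q : T.Walk x y, ∀ z ∈ q.support, z = x ∨ z = y ∨ z ∈ C by
    obtain ⟨q, hq⟩ := this
    exact ⟨q.bypass, q.bypass_isPath, fun z hz => hq z (q.support_bypass_subset_support hz)⟩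
  obtain ⟨-, u, hu, hux⟩ := hx
  obtain ⟨-, v, hv, hvy⟩ := hy
  obtain ⟨p, hp⟩ : ∃ p : T.Walk u v, ∀ z ∈ p.support, z ∈ C := by
    obtain ⟨p⟩ := hC.preconnected ⟨u, hu⟩ ⟨v, hv⟩
    refine ⟨p.map (Embedding.induce C).toHom, fun z hz => ?_⟩
    have hz : z ∈ (p.map (Embedding.induce C).toHom).support := hz
    obtain ⟨⟨z, hzC⟩, -, rfl⟩ := List.mem_map.mp (Walk.support_map _ p ▸ hz)
    exact hzC
  refine ⟨.cons hux.symm (p.concat hvy), fun z hz => ?_⟩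
  simp only [Walk.support_cons, Walk.support_concat, List.mem_cons, List.mem_append,
    List.not_mem_nil, or_false] at hz
  rcases hz with rfl | hz | rfl
  · exact .inl rfl
  · exact .inr (.inr (hp z hz))
  · exact .inr (.inl rfl)

lemma eq_or_eq_of_isAncestor_of_mem_nbhdSet (hT : T.IsTree) (hC : (T.induce C).Connected)
    (ha : a ∈ nbhdSet T C) (hb : b ∈ nbhdSet T C) (hc : c ∈ nbhdSet T C)
    (hab : IsAncestor T r a b) (hbc : IsAncestor T r b c) : b = a ∨ b = c := by
  by_cases hba : b = a
  · exact .inl hba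
  obtain ⟨q, -, hq⟩ := exists_isPath_of_mem_nbhdSet hC ha hc
  have hbq : b ∈ q.support := mem_support_of_isAncestor_of_not_isAncestor q hbc
    fun h => hba (h.antisymm hT hab)
  exact (hq b hbq).imp id fun h => h.resolve_right hb.1

lemma IsCompOfDel.nbhdSet_subset {X : Set α} (hC : IsCompOfDel T X C) : nbhdSet T C ⊆ X := by
  rintro z ⟨hzC, u, hu, huz⟩
  by_contra hzX
  exact hzC (hC.2.2 u hu z huz hzX)

lemma IsCompOfDel.isAncestor_or_isAncestor_of_mem_nbhdSet {Y : Set α} (hT : T.IsTree)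
    (hC : IsCompOfDel T (lcaClosure T r Y) C) (hx : x ∈ nbhdSet T C) (hy : y ∈ nbhdSet T C) :
    IsAncestor T r x y ∨ IsAncestor T r y x := by
  obtain ⟨l, hl⟩ := exists_isLCA hT r x y
  obtain ⟨q, hq, hqC⟩ := exists_isPath_of_mem_nbhdSet hC.2.1 hx hy
  rcases hqC l (hl.mem_support_of_isPath hT hq) with rfl | rfl | hlC
  · exact .inl hl.2.1
  · exact .inr hl.1
  · exact absurd (hl.mem_lcaClosure hT (hC.nbhdSet_subset hx) (hC.nbhdSet_subset hy))
      (Set.disjoint_left.mp hC.1 hlC)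

lemma IsCompOfDel.ncard_nbhdSet_le_two {Y : Set α} (hT : T.IsTree)
    (hC : IsCompOfDel T (lcaClosure T r Y) C) : (nbhdSet T C).ncard ≤ 2 := by
  rcases (nbhdSet T C).finite_or_infinite with hfin | hinf
  swap
  · simp [hinf.ncard]
  by_contra! h
  obtain ⟨a, b, c, ha, hb, hc, hab, hac, hbc⟩ := (Set.two_lt_ncard_iff hfin).mp h
  wlog hab' : IsAncestor T r a b generalizing a b
  · exact this b a hb ha hab.symm hbc hac
      ((hC.isAncestor_or_isAncestor_of_mem_nbhdSet hT ha hb).resolve_left hab')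
  rcases hC.isAncestor_or_isAncestor_of_mem_nbhdSet hT hb hc with hbc' | hcb
  · exact (eq_or_eq_of_isAncestor_of_mem_nbhdSet hT hC.2.1 ha hb hc hab' hbc').elim
      (hab ∘ Eq.symm) hbc
  rcases hC.isAncestor_or_isAncestor_of_mem_nbhdSet hT ha hc with hac' | hca
  · exact (eq_or_eq_of_isAncestor_of_mem_nbhdSet hT hC.2.1 ha hc hb hac' hcb).elim
      (hac ∘ Eq.symm) (hbc ∘ Eq.symm)
  · exact (eq_or_eq_of_isAncestor_of_mem_nbhdSet hT hC.2.1 hc ha hb hca hab').elim hac hab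

end Components

theorem lca_closure_bound_general {α : Type} (m : ℕ)
    (T : SimpleGraph α) (hT : T.IsTree) (r : α) (Y : Set α) (hY : Y.ncard = m) :
    (lcaClosure T r Y).ncard ≤ 2 * m - 1 ∧
      ∀ C : Set α, IsCompOfDel T (lcaClosure T r Y) C → (nbhdSet T C).ncard ≤ 2 :=
  hY ▸ ⟨ncard_lcaClosure_le hT Y, fun _ hC => hC.ncard_nbhdSet_le_two hT⟩

/-- the LCA closure of a set of `m` vertices of a rooted tree has at most
`2m - 1` elements, and every component of `T - X` has at most two neighbors. -/
theorem lca_closure_bound {α : Type} [Fintype α] (m : ℕ) (hm : 0 < m)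
    (T : SimpleGraph α) (hT : T.IsTree) (r : α) (Y : Set α) (hY : Y.ncard = m) :
    (lcaClosure T r Y).ncard ≤ 2 * m - 1 ∧
      ∀ C : Set α, IsCompOfDel T (lcaClosure T r Y) C → (nbhdSet T C).ncard ≤ 2 :=
  lca_closure_bound_general m T hT r Y hY
end

section
/- Let G be a graph, p and m positive integers, and P a partition of V(G) such that every part of P has at most m elements. Then χ_p(G) ≤ m · χ_p(G/P). -/
open SimpleGraph

/-!
Colour a vertex by the pair (its label inside its part, the colour of its part in an optimal
`p`-centered colouring of `G/Pa`); parts have at most `m` vertices, so `m` labels suffice. A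
connected subgraph `H` of `G` projects onto a connected subgraph of `G/Pa` seeing the same
part colours. If those are more than `p`, so are the pair colours on `H`; otherwise some part
`P` has a unique colour on the projection, and then any vertex of `H` in `P` has a unique pair,
because the labels separate the vertices inside `P`.
-/

open Function

namespace SimpleGraph

variable {V W : Type*} {G : SimpleGraph V} {G' : SimpleGraph W}

theorem Reachable.map_of_adj {f : V → W} (hf : ∀ ⦃u v⦄, G.Adj u v → f u ≠ f v → G'.Adj (f u) (f v))
    {u v : V} (h : G.Reachable u v) : G'.Reachable (f u) (f v) := by
  rw [reachable_iff_reflTransGen] at h ⊢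
  refine h.lift' f fun a b hab => show Relation.ReflTransGen G'.Adj (f a) (f b) from ?_
  by_cases hfab : f a = f b
  · exact hfab ▸ .refl
  · exact .single (hf hab hfab)

theorem Subgraph.Connected.induce_image {f : V → W}
    (hf : ∀ ⦃u v⦄, G.Adj u v → f u ≠ f v → G'.Adj (f u) (f v)) {H : G.Subgraph}
    (hH : H.Connected) : ((⊤ : G'.Subgraph).induce (f '' H.verts)).Connected := by
  let f' : H.verts → f '' H.verts := fun u => ⟨f u, u, u.2, rfl⟩
  have hf' : ∀ ⦃u v⦄, H.coe.Adj u v → f' u ≠ f' v → _ := fun u v huv hne =>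
    (⟨(f' u).2, (f' v).2, hf huv.adj_sub (Subtype.coe_ne_coe.mpr hne)⟩ :
      ((⊤ : G'.Subgraph).induce (f '' H.verts)).coe.Adj (f' u) (f' v))
  rw [Subgraph.connected_iff, Subgraph.preconnected_iff]
  refine ⟨?_, hH.nonempty.image f⟩
  rintro ⟨_, u, hu, rfl⟩ ⟨_, v, hv, rfl⟩
  exact (hH.preconnected ⟨u, hu⟩ ⟨v, hv⟩).map_of_adj (f := f') hf'

end SimpleGraph

section CenteredColoring

variable {V W α β : Type*} {p : ℕ} {G : SimpleGraph V}

theorem isCenteredColoring_of_injective (p : ℕ) (G : SimpleGraph V) {φ : V → α}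
    (hφ : Injective φ) : IsCenteredColoring p G φ := fun _ hH =>
  let ⟨u, hu⟩ := hH.nonempty
  .inr ⟨u, hu, fun _ _ hne heq => hne (hφ heq)⟩

theorem IsCenteredColoring.comp_injective {φ : V → α} (hφ : IsCenteredColoring p G φ)
    {e : α → β} (he : Injective e) : IsCenteredColoring p G (e ∘ φ) := by
  intro H hH
  rw [Set.image_comp, Set.ncard_image_of_injective _ he]
  refine (hφ H hH).imp_right fun ⟨u, hu, huniq⟩ => ⟨u, hu, fun w hw hne => ?_⟩
  exact he.ne (huniq w hw hne)

theorem IsCenteredColoring.prod_comp [Finite V] {G' : SimpleGraph W} {f : V → W}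
    (hf : ∀ ⦃u v⦄, G.Adj u v → f u ≠ f v → G'.Adj (f u) (f v)) {φ : W → α}
    (hφ : IsCenteredColoring p G' φ) {g : V → β} (hg : Injective fun v => (g v, f v)) :
    IsCenteredColoring p G fun v => (g v, φ (f v)) := by
  intro H hH
  rcases hφ _ (hH.induce_image hf) with hmany | ⟨_, ⟨u, hu, rfl⟩, huniq⟩
  · left
    calc p < (φ '' (f '' H.verts)).ncard := hmany
      _ = (Prod.snd '' ((fun v => (g v, φ (f v))) '' H.verts)).ncard := by
        simp only [Set.image_image]
      _ ≤ _ := Set.ncard_image_le (Set.toFinite _)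
  · right
    refine ⟨u, hu, fun w hw hne heq => hne (hg ?_)⟩
    obtain ⟨hgwu, hφwu⟩ := Prod.ext_iff.mp heq
    have hfwu : f w = f u := by
      by_contra hfne
      exact huniq (f w) ⟨w, hw, rfl⟩ hfne hφwu
    exact Prod.ext hgwu hfwu

end CenteredColoring

section ChromaticNumber

variable {V : Type*} {p k : ℕ} {G : SimpleGraph V}

theorem centeredChromaticNumber_le {φ : V → Fin k} (hφ : IsCenteredColoring p G φ) :
    centeredChromaticNumber p G ≤ k :=
  Nat.sInf_le ⟨φ, hφ⟩

theorem exists_isCenteredColoring_centeredChromaticNumber [Finite V] (p : ℕ)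
    (G : SimpleGraph V) :
    ∃ φ : V → Fin (centeredChromaticNumber p G), IsCenteredColoring p G φ :=
  Nat.sInf_mem (s := {k | ∃ φ : V → Fin k, IsCenteredColoring p G φ})
    ⟨_, _, isCenteredColoring_of_injective p G (Finite.equivFin V).injective⟩

end ChromaticNumber

theorem exists_fin_injective_prod {V β : Type*} [Finite V] {m : ℕ} (f : V → β)
    (hf : ∀ b, (f ⁻¹' {b}).ncard ≤ m) : ∃ g : V → Fin m, Injective fun v => (g v, f v) := by
  have e : ∀ b, f ⁻¹' {b} ↪ Fin m := fun b =>
    (Finite.equivFin _).toEmbedding.trans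
      (Fin.castLEEmb ((Nat.card_coe_set_eq _).trans_le (hf b)))
  have he : ∀ w b (hb : f w = b), e b ⟨w, hb⟩ = e (f w) ⟨w, rfl⟩ := by
    rintro w b rfl
    rfl
  refine ⟨fun v => e (f v) ⟨v, rfl⟩, fun v w hvw => ?_⟩
  obtain ⟨hevw, hfvw⟩ : e (f v) ⟨v, rfl⟩ = e (f w) ⟨w, rfl⟩ ∧ f v = f w := Prod.ext_iff.mp hvw
  rw [← he w (f v) hfvw.symm] at hevw
  exact congrArg Subtype.val ((e (f v)).injective hevw)

namespace IsVertexPartition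

variable {V : Type*} {Pa : Set (Set V)} (hPa : IsVertexPartition Pa)

noncomputable def partOf (u : V) : Pa :=
  ⟨(hPa.2 u).choose, (hPa.2 u).choose_spec.1.1⟩

theorem partOf_eq_iff {u : V} {P : Pa} : hPa.partOf u = P ↔ u ∈ (P : Set V) := by
  refine ⟨fun h => h ▸ (hPa.2 u).choose_spec.1.2, fun hu => Subtype.ext ?_⟩
  exact (hPa.2 u).unique (hPa.2 u).choose_spec.1 ⟨P.2, hu⟩

theorem preimage_partOf_singleton (P : Pa) : hPa.partOf ⁻¹' {P} = P :=
  Set.ext fun _ => hPa.partOf_eq_iff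

theorem quotientGraph_adj_partOf {G : SimpleGraph V} ⦃u v : V⦄ (huv : G.Adj u v)
    (hne : hPa.partOf u ≠ hPa.partOf v) :
    (quotientGraph G Pa).Adj (hPa.partOf u) (hPa.partOf v) :=
  ⟨hne, u, hPa.partOf_eq_iff.mp rfl, v, hPa.partOf_eq_iff.mp rfl, huv⟩

end IsVertexPartition

theorem centered_chromatic_quotient_general {V : Type} [Fintype V] (G : SimpleGraph V)
    (p m : ℕ) (Pa : Set (Set V))
    (hPa : IsVertexPartition Pa) (hsize : ∀ P ∈ Pa, P.ncard ≤ m) :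
    centeredChromaticNumber p G ≤ m * centeredChromaticNumber p (quotientGraph G Pa) := by
  obtain ⟨φ, hφ⟩ := exists_isCenteredColoring_centeredChromaticNumber p (quotientGraph G Pa)
  obtain ⟨g, hg⟩ := exists_fin_injective_prod hPa.partOf fun P => by
    rw [hPa.preimage_partOf_singleton]
    exact hsize P P.2
  exact centeredChromaticNumber_le
    ((hφ.prod_comp hPa.quotientGraph_adj_partOf hg).comp_injective finProdFinEquiv.injective)

/-- if every part of a vertex partition `Pa` of `G` has at most `m`
elements, then `χ_p(G) ≤ m * χ_p(G/Pa)`. -/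
theorem centered_chromatic_quotient {V : Type} [Fintype V] (G : SimpleGraph V)
    (p m : ℕ) (hp : 0 < p) (hm : 0 < m) (Pa : Set (Set V))
    (hPa : IsVertexPartition Pa) (hsize : ∀ P ∈ Pa, P.ncard ≤ m) :
    centeredChromaticNumber p G ≤ m * centeredChromaticNumber p (quotientGraph G Pa) :=
  centered_chromatic_quotient_general G p m Pa hPa hsize
end

section
/- Let t be an integer with t ≥ 2. For every K_t-minor-free graph G, every subset R = {r_1,…,r_{t−2}} of V(G) of size t−2 such that G − R is connected, and every family F of connected subgraphs of G − R each of which contains a neighbor (in G) of every vertex of R, the family F does not contain t pairwise vertex-disjoint members. -/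
open SimpleGraph

/-!
Suppose `F₀, …, F_{t-1}` are pairwise disjoint members of `𝓕`. Since `G - R` is connected, we
can grow them inside `G - R`, one fresh vertex at a time along a walk from `F₀` to `F₁`, keeping
them disjoint and connected, until two of them, say `F_i` and `F_j`, are adjacent. Each of the
`t - 2` vertices of `R` has a neighbour in every grown set; adding them to the `t - 2` sets other
than `F_i, F_j`, one to each, yields a `K_t` model.
-/

open Function

theorem pairwise_disjoint_update {ι α : Type*} [DecidableEq ι] {X : ι → Set α}
    (hX : Pairwise (Disjoint on X)) {i : ι} {S : Set α} (hS : ∀ k, k ≠ i → Disjoint S (X k)) :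
    Pairwise (Disjoint on (update X i S)) := by
  intro k m hkm
  rcases eq_or_ne k i with rfl | hk
  · simpa [onFun, update_of_ne hkm.symm] using hS m hkm.symm
  rcases eq_or_ne m i with rfl | hm
  · simpa [onFun, update_of_ne hkm] using (hS k hkm).symm
  · simpa [onFun, update_of_ne hk, update_of_ne hm] using hX hkm

theorem Finset.exists_surjOn_of_card_le {α β : Type*} [Nonempty β] {s : Finset α}
    {u : Finset β} (h : u.card ≤ s.card) : ∃ g : α → β, Set.SurjOn g s u := by
  obtain ⟨e⟩ : Nonempty (u ↪ s) := Embedding.nonempty_of_card_le (by simpa)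
  have he : Injective fun k : u => (e k : α) := Subtype.val_injective.comp e.injective
  refine ⟨extend (fun k : u => (e k : α)) Subtype.val fun _ => Classical.arbitrary β,
    fun k hk => ⟨e ⟨k, hk⟩, (e ⟨k, hk⟩).2, he.extend_apply _ _ ⟨k, hk⟩⟩⟩

namespace SimpleGraph

variable {V : Type*} {G : SimpleGraph V}

theorem connected_induce_insert {X : Set V} {v x : V} (hX : (G.induce X).Connected)
    (hx : x ∈ X) (hvx : G.Adj v x) : (G.induce (insert v X)).Connected := by
  have hvX : insert v X = {v, x} ∪ X := by
    ext y; simp only [Set.mem_insert_iff, Set.mem_union, Set.mem_singleton_iff]; grind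
  rw [hvX]
  exact induce_union_connected (induce_pair_connected_of_adj hvx).preconnected hX.preconnected
    ⟨x, by simp, hx⟩

theorem connected_induce_union_of_forall_exists_adj {X Q : Set V}
    (hX : (G.induce X).Connected) (hQ : ∀ q ∈ Q, ∃ x ∈ X, G.Adj q x) :
    (G.induce (X ∪ Q)).Connected := by
  obtain ⟨u, hu⟩ := hX.nonempty
  refine induce_connected_of_patches u (Or.inl hu) fun {v} hv => ?_
  rcases hv with hv | hv
  · exact ⟨X, Set.subset_union_left, hu, hv, hX.preconnected _ _⟩
  · obtain ⟨x, hx, hvx⟩ := hQ v hv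
    refine ⟨insert v X, Set.insert_subset (Or.inr hv) Set.subset_union_left,
      Or.inr hu, Set.mem_insert v X, (connected_induce_insert hX hx hvx).preconnected _ _⟩

theorem exists_le_adj_of_walk {ι : Type*} {U : Set V} {a b : U} (p : (G.induce U).Walk a b)
    (X : ι → Set V) {i j : ι} (hij : i ≠ j) (ha : (a : V) ∈ X i) (hb : (b : V) ∈ X j)
    (hconn : ∀ k, (G.induce (X k)).Connected) (hdisj : Pairwise (Disjoint on X))
    (hU : ∀ k, X k ⊆ U) :
    ∃ Y : ι → Set V, X ≤ Y ∧ (∀ k, (G.induce (Y k)).Connected) ∧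
      Pairwise (Disjoint on Y) ∧ (∀ k, Y k ⊆ U) ∧
      ∃ k m, k ≠ m ∧ ∃ u ∈ Y k, ∃ w ∈ Y m, G.Adj u w := by
  classical
  induction p generalizing X i with
  | nil => exact absurd hb (Set.disjoint_left.mp (hdisj hij) ha)
  | @cons a a' b hadj p ih =>
    by_cases hk : ∃ k, (a' : V) ∈ X k
    · obtain ⟨k, hk⟩ := hk
      obtain rfl | hki := eq_or_ne k i
      · exact ih X hij hk hb hconn hdisj hU
      · exact ⟨X, le_rfl, hconn, hdisj, hU, i, k, hki.symm, a, ha, a', hk, hadj⟩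
    · push Not at hk
      obtain ⟨Y, hXY, hY⟩ := ih (update X i (insert (a' : V) (X i))) hij
        (by simp) (by simpa [update_of_ne hij.symm] using hb)
        (forall_update_iff _ (p := fun _ s => (G.induce s).Connected) |>.mpr
          ⟨connected_induce_insert (hconn i) ha hadj.symm, fun k _ => hconn k⟩)
        (pairwise_disjoint_update hdisj fun k hki => Set.disjoint_insert_left.mpr
          ⟨hk k, hdisj hki.symm⟩)
        (forall_update_iff _ (p := fun _ s => s ⊆ U) |>.mpr
          ⟨Set.insert_subset a'.2 (hU i), fun k _ => hU k⟩)
      exact ⟨Y, le_trans (le_update_iff.mpr ⟨Set.subset_insert _ _, fun _ _ => le_rfl⟩) hXY, hY⟩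

theorem not_cliqueMinorFree_of_surjOn {t : ℕ} {R : Set V} (X : Fin t → Set V)
    (hconn : ∀ k, (G.induce (X k)).Connected) (hdisj : Pairwise (Disjoint on X))
    (hXR : ∀ k, Disjoint (X k) R) (hRX : ∀ x ∈ R, ∀ k, ∃ u ∈ X k, G.Adj x u)
    {i j : Fin t} (hadj : ∃ u ∈ X i, ∃ w ∈ X j, G.Adj u w)
    {g : V → Fin t} (hg : Set.SurjOn g R {i, j}ᶜ) : ¬ CliqueMinorFree G t := by
  set Y : Fin t → Set V := fun k => X k ∪ {x ∈ R | g x = k}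
  have hY_adj_of_fiber : ∀ k m, k ∉ ({i, j} : Set (Fin t)) →
      ∃ u ∈ Y k, ∃ w ∈ Y m, G.Adj u w := by
    intro k m hk
    obtain ⟨x, hxR, rfl⟩ := hg hk
    obtain ⟨u, hu, hxu⟩ := hRX x hxR m
    exact ⟨x, Or.inr ⟨hxR, rfl⟩, u, Or.inl hu, hxu⟩
  refine not_not.mpr ⟨Y, fun k => ?_, fun k m hkm => ?_, fun k m hkm => ?_⟩
  · exact connected_induce_union_of_forall_exists_adj (hconn k) fun x hx => hRX x hx.1 k
  · rw [Set.disjoint_left]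
    rintro x (hxk | ⟨hxR, rfl⟩) (hxm | ⟨hxR', hxm⟩)
    · exact Set.disjoint_left.mp (hdisj hkm) hxk hxm
    · exact Set.disjoint_left.mp (hXR k) hxk hxR'
    · exact Set.disjoint_left.mp (hXR m) hxm hxR
    · exact hkm hxm
  · by_cases hk : k ∈ ({i, j} : Set (Fin t))
    · by_cases hm : m ∈ ({i, j} : Set (Fin t))
      · obtain ⟨u, hu, w, hw, huw⟩ := hadj
        rcases hk with rfl | rfl <;> rcases hm with rfl | rfl
        all_goals first
          | exact absurd rfl hkm
          | exact ⟨u, Or.inl hu, w, Or.inl hw, huw⟩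
          | exact ⟨w, Or.inl hw, u, Or.inl hu, huw.symm⟩
      · obtain ⟨u, hu, w, hw, huw⟩ := hY_adj_of_fiber m k hm
        exact ⟨w, hw, u, hu, huw.symm⟩
    · exact hY_adj_of_fiber k m hk

end SimpleGraph

theorem no_t_disjoint_members_general (t : ℕ) (ht : 2 ≤ t) {V : Type}
    (G : SimpleGraph V) (hminor : CliqueMinorFree G t)
    (R : Finset V) (hR : R.card = t - 2)
    (hconn : (G.induce ((R : Set V)ᶜ)).Connected)
    (𝓕 : Set G.Subgraph)
    (h𝓕 : ∀ F ∈ 𝓕, F.Connected ∧ Disjoint F.verts (R : Set V) ∧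
      ∀ x ∈ R, ∃ u ∈ F.verts, G.Adj x u) :
    ¬ ∃ f : Fin t → G.Subgraph, (∀ i, f i ∈ 𝓕) ∧
        ∀ i j, i ≠ j → Disjoint (f i).verts (f j).verts := by
  rintro ⟨f, hf𝓕, hfd⟩
  have hf := fun k => h𝓕 _ (hf𝓕 k)
  let i₀ : Fin t := ⟨0, by omega⟩
  let i₁ : Fin t := ⟨1, by omega⟩
  obtain ⟨a, ha⟩ := (hf i₀).1.nonempty
  obtain ⟨b, hb⟩ := (hf i₁).1.nonempty
  obtain ⟨p⟩ := hconn.preconnected ⟨a, Set.disjoint_left.mp (hf i₀).2.1 ha⟩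
    ⟨b, Set.disjoint_left.mp (hf i₁).2.1 hb⟩
  obtain ⟨X, hfX, hXconn, hXdisj, hXR, i, j, hij, hX_adj⟩ :=
    exists_le_adj_of_walk p (fun k => (f k).verts) (by simp [i₀, i₁, Fin.ext_iff]) ha hb
      (fun k => (hf k).1.induce_verts) hfd
      (fun k => Set.subset_compl_iff_disjoint_right.mpr (hf k).2.1)
  have : Nonempty (Fin t) := ⟨i⟩
  obtain ⟨g, hg⟩ := Finset.exists_surjOn_of_card_le (s := R) (u := {i, j}ᶜ)
    (by rw [Finset.card_compl, Finset.card_pair hij, Fintype.card_fin, hR])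
  refine not_cliqueMinorFree_of_surjOn X hXconn hXdisj
    (fun k => Set.subset_compl_iff_disjoint_right.mp (hXR k))
    (fun x hx k => ?_) hX_adj (by rwa [Finset.coe_compl, Finset.coe_pair] at hg) hminor
  obtain ⟨u, hu, hxu⟩ := (hf k).2.2 x hx
  exact ⟨u, hfX k hu, hxu⟩

/-- if `G` is `K_t`-minor-free, `R` has `t-2` vertices, `G - R` is
connected, and `𝓕` is a family of connected subgraphs of `G - R` each containing a
neighbor of every vertex of `R`, then `𝓕` has no `t` pairwise vertex-disjoint members. -/
theorem no_t_disjoint_members (t : ℕ) (ht : 2 ≤ t) {V : Type} [Fintype V] [DecidableEq V]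
    (G : SimpleGraph V) (hminor : CliqueMinorFree G t)
    (R : Finset V) (hR : R.card = t - 2)
    (hconn : (G.induce ((R : Set V)ᶜ)).Connected)
    (𝓕 : Set G.Subgraph)
    (h𝓕 : ∀ F ∈ 𝓕, F.Connected ∧ Disjoint F.verts (R : Set V) ∧
      ∀ x ∈ R, ∃ u ∈ F.verts, G.Adj x u) :
    ¬ ∃ f : Fin t → G.Subgraph, (∀ i, f i ∈ 𝓕) ∧
        ∀ i j, i ≠ j → Disjoint (f i).verts (f j).verts :=
  no_t_disjoint_members_general t ht G hminor R hR hconn 𝓕 h𝓕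
end
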